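/- arXiv:1705.09750 — 6 statements merged into one kernel-verified Lean document; each statement's English description precedes it below -/
import Mathlib

section
/- If F and G are final segments (upward closed sets) of A* with the Higman ordering, then the concatenation FG = {αβ : α ∈ F, β ∈ G} is again a final segment of A*. -/
/-- The Higman (subword) ordering on words over an ordered alphabet `A`. -/
def Hig {A : Type*} [PartialOrder A] (u v : List A) : Prop :=
  List.SublistForall₂ (· ≤ ·) u v

/-- Elementwise concatenation of languages. -/
def conc {A : Type*} (X Y : Set (List A)) : Set (List A) :=
  Set.image2 (· ++ ·) X Y

/-- A final segment (upward closed set) of `A*` for the Higman ordering. -/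
def IsFinal {A : Type*} [PartialOrder A] (F : Set (List A)) : Prop :=
  ∀ ⦃a b : List A⦄, Hig a b → a ∈ F → b ∈ F

/-- Upward closure of a set of words. -/
def upset {A : Type*} [PartialOrder A] (X : Set (List A)) : Set (List A) :=
  {b | ∃ a ∈ X, Hig a b}

/-- The set of minimal elements of a set of words. -/
def minSet {A : Type*} [PartialOrder A] (X : Set (List A)) : Set (List A) :=
  {x | x ∈ X ∧ ∀ y ∈ X, Hig y x → y = x}

/-- An antichain of words for the Higman ordering. -/
def IsAnti {A : Type*} [PartialOrder A] (U : Set (List A)) : Prop :=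
  ∀ x ∈ U, ∀ y ∈ U, x ≠ y → ¬ Hig x y


theorem hig_append_split {A : Type*} [PartialOrder A] {a b c : List A}
    (h : Hig (a ++ b) c) : ∃ c₁ c₂, c = c₁ ++ c₂ ∧ Hig a c₁ ∧ Hig b c₂ := by
  rw [Hig, List.sublistForall₂_iff] at h
  obtain ⟨l, hf, hs⟩ := h
  have hf' : List.Forall₂ (flip (· ≤ ·)) l (a ++ b) := List.Forall₂.flip hf
  have h1 := List.forall₂_take_append l a b hf'
  have h2 := List.forall₂_drop_append l a b hf'
  have hl : l = l.take a.length ++ l.drop a.length := (List.take_append_drop _ _).symm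
  rw [hl] at hs
  obtain ⟨r₁, r₂, rfl, hs1, hs2⟩ := List.append_sublist_iff.mp hs
  exact ⟨r₁, r₂, rfl, List.sublistForall₂_iff.mpr ⟨_, List.Forall₂.flip h1, hs1⟩,
    List.sublistForall₂_iff.mpr ⟨_, List.Forall₂.flip h2, hs2⟩⟩

theorem stmt2 {A : Type*} [PartialOrder A] (F G : Set (List A))
    (hF : IsFinal F) (hG : IsFinal G) : IsFinal (conc F G) := by
  rintro a b hab ⟨x, hx, y, hy, rfl⟩
  obtain ⟨c₁, c₂, rfl, h1, h2⟩ := hig_append_split hab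
  exact ⟨c₁, hF h1 hx, c₂, hG h2 hy, rfl⟩
end

section
/- The monoid F°(A*) of non-empty final segments of A* (under concatenation, with neutral element A*) is cancellative: if X, Y, Z are non-empty final segments with XY = XZ, then Y = Z; and if YX = ZX then Y = Z. -/
lemma hig_of_sublist {A : Type*} [PartialOrder A] {u v : List A} (h : List.Sublist u v) : Hig u v :=
  List.sublistForall₂_iff.2 ⟨u, List.forall₂_refl u, h⟩

lemma exists_min_len {A : Type*} {X : Set (List A)} (h : X.Nonempty) :
    ∃ x ∈ X, ∀ u ∈ X, x.length ≤ u.length := by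
  obtain ⟨w, hw⟩ := h
  have hne : {n | ∃ x ∈ X, x.length = n}.Nonempty := ⟨w.length, w, hw, rfl⟩
  obtain ⟨x, hx, hxn⟩ := Nat.sInf_mem hne
  exact ⟨x, hx, fun u hu => hxn ▸ Nat.sInf_le ⟨u, hu, rfl⟩⟩

lemma left_cancel_sub {A : Type*} [PartialOrder A] {X Y Z : Set (List A)}
    (hZ : IsFinal Z) (hXne : X.Nonempty) (h : conc X Y ⊆ conc X Z) : Y ⊆ Z := by
  obtain ⟨x, hx, hmin⟩ := exists_min_len hXne
  intro y hy
  obtain ⟨u, hu, z, hz, heq⟩ := h ⟨x, hx, y, hy, rfl⟩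
  have heq' : x ++ y = u ++ z := heq.symm
  rcases List.append_eq_append_iff.1 heq' with ⟨a, _, hy'⟩ | ⟨c, hxc, hzc⟩
  · exact hZ (hig_of_sublist (hy' ▸ List.sublist_append_right a z)) hz
  · have hmu := hmin u hu
    have hl := congrArg List.length hxc
    simp only [List.length_append] at hl
    have : c = [] := by
      have := List.length_eq_zero_iff.mp (by omega : c.length = 0)
      exact this
    subst this
    simpa [hzc] using hz

lemma right_cancel_sub {A : Type*} [PartialOrder A] {X Y Z : Set (List A)}
    (hZ : IsFinal Z) (hXne : X.Nonempty) (h : conc Y X ⊆ conc Z X) : Y ⊆ Z := by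
  obtain ⟨x, hx, hmin⟩ := exists_min_len hXne
  intro y hy
  obtain ⟨z, hz, u, hu, heq⟩ := h ⟨y, hy, x, hx, rfl⟩
  have heq' : y ++ x = z ++ u := heq.symm
  rcases List.append_eq_append_iff.1 heq' with ⟨a, hza, hxa⟩ | ⟨c, hyc, hxc⟩
  · have hmu := hmin u hu
    have hl := congrArg List.length hxa
    simp only [List.length_append] at hl
    have : a = [] := List.length_eq_zero_iff.mp (by omega)
    subst this
    have : y = z := by simpa using hza.symm
    exact this ▸ hz
  · exact hZ (hig_of_sublist (hyc ▸ List.sublist_append_left z c)) hz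

theorem stmt4 {A : Type*} [PartialOrder A] (X Y Z : Set (List A))
    (hX : IsFinal X) (hXne : X.Nonempty)
    (hY : IsFinal Y) (hYne : Y.Nonempty)
    (hZ : IsFinal Z) (hZne : Z.Nonempty) :
    (conc X Y = conc X Z → Y = Z) ∧ (conc Y X = conc Z X → Y = Z) := by
  constructor
  · intro h
    exact Set.Subset.antisymm (left_cancel_sub hZ hXne h.le) (left_cancel_sub hY hXne h.ge)
  · intro h
    exact Set.Subset.antisymm (right_cancel_sub hZ hXne h.le) (right_cancel_sub hY hXne h.ge)
end

section
/- A monoid V is free (isomorphic to the free monoid over some set) if and only if V is equidivisible and graded. -/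
/-- A monoid is equidivisible if `u₁u₂ = v₁v₂` implies that one of `u₁, v₁` is a
left factor of the other, compatibly (Levi-style condition). -/
def Equidivisible (M : Type*) [Monoid M] : Prop :=
  ∀ u₁ u₂ v₁ v₂ : M, u₁ * u₂ = v₁ * v₂ →
    (∃ w, u₁ = v₁ * w ∧ v₂ = w * u₂) ∨ (∃ w, v₁ = u₁ * w ∧ u₂ = w * v₂)

/-- A monoid is graded if there is a morphism to `(ℕ, +)` whose kernel is `{1}`. -/
def Graded (M : Type*) [Monoid M] : Prop :=
  ∃ γ : M → ℕ, (∀ x y : M, γ (x * y) = γ x + γ y) ∧ ∀ x : M, γ x = 0 ↔ x = 1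

/-- An irreducible element of a monoid. -/
def IrredElem {M : Type*} [Monoid M] (x : M) : Prop :=
  x ≠ 1 ∧ ∀ y z : M, x = y * z → x = y ∨ x = z

section Aux

variable {M : Type} [Monoid M]

lemma exists_fact (γ : M → ℕ) (hmul : ∀ x y : M, γ (x * y) = γ x + γ y)
    (hker : ∀ x : M, γ x = 0 ↔ x = 1) :
    ∀ n (x : M), γ x = n → ∃ l : List {a : M // IrredElem a},
      (l.map Subtype.val).prod = x := by
  intro n
  induction n using Nat.strong_induction_on with
  | _ n ih =>
    intro x hx
    by_cases h1 : x = 1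
    · exact ⟨[], by simp [h1]⟩
    by_cases hirr : IrredElem x
    · exact ⟨[⟨x, hirr⟩], by simp⟩
    · have : ∃ y z : M, x = y * z ∧ x ≠ y ∧ x ≠ z := by
        by_contra hc
        push_neg at hc
        exact hirr ⟨h1, fun y z hyz => by
          by_contra hne
          push_neg at hne
          exact hne.2 (hc y z hyz hne.1)⟩
      obtain ⟨y, z, hyz, hxy, hxz⟩ := this
      have hy1 : y ≠ 1 := fun h => hxz (by simpa [h] using hyz)
      have hz1 : z ≠ 1 := fun h => hxy (by simpa [h] using hyz)
      have hyp : 0 < γ y := Nat.pos_of_ne_zero (fun h => hy1 ((hker y).mp h))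
      have hzp : 0 < γ z := Nat.pos_of_ne_zero (fun h => hz1 ((hker z).mp h))
      have hsum : γ y + γ z = n := by rw [← hmul, ← hyz, hx]
      have hylt : γ y < n := by omega
      have hzlt : γ z < n := by omega
      obtain ⟨ly, hly⟩ := ih _ hylt y rfl
      obtain ⟨lz, hlz⟩ := ih _ hzlt z rfl
      exact ⟨ly ++ lz, by rw [List.map_append, List.prod_append, hly, hlz, hyz]⟩

lemma fact_unique (hE : Equidivisible M) (γ : M → ℕ)
    (hmul : ∀ x y : M, γ (x * y) = γ x + γ y)
    (hker : ∀ x : M, γ x = 0 ↔ x = 1) :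
    ∀ (l₁ l₂ : List {a : M // IrredElem a}),
      (l₁.map Subtype.val).prod = (l₂.map Subtype.val).prod → l₁ = l₂ := by
  intro l₁
  induction l₁ with
  | nil =>
    intro l₂ h
    cases l₂ with
    | nil => rfl
    | cons b t =>
      exfalso
      simp only [List.map_nil, List.prod_nil, List.map_cons, List.prod_cons] at h
      have : γ ((b : M) * (t.map Subtype.val).prod) = 0 := by
        rw [← h]; simpa using (hker 1).mpr rfl
      rw [hmul] at this
      exact b.2.1 ((hker _).mp (by omega))
  | cons a t ih =>
    intro l₂ h
    cases l₂ with
    | nil =>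
      exfalso
      simp only [List.map_nil, List.prod_nil, List.map_cons, List.prod_cons] at h
      have : γ ((a : M) * (t.map Subtype.val).prod) = 0 := by
        rw [h]; simpa using (hker 1).mpr rfl
      rw [hmul] at this
      exact a.2.1 ((hker _).mp (by omega))
    | cons b t₂ =>
      simp only [List.map_cons, List.prod_cons] at h
      have hab : (a : M) = b ∧ (t.map Subtype.val).prod = (t₂.map Subtype.val).prod := by
        rcases hE _ _ _ _ h with ⟨w, hw1, hw2⟩ | ⟨w, hw1, hw2⟩
        · -- a = b * w, t₂prod = w * tprod
          rcases a.2.2 _ _ hw1 with hab | haw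
          · have hw : w = 1 := by
              have := hmul (b : M) w
              rw [← hw1, hab] at this
              exact (hker w).mp (by omega)
            rw [hw, one_mul] at hw2
            exact ⟨hab, hw2.symm⟩
          · exfalso
            rw [← haw] at hw1
            have := hmul (b : M) (a : M)
            rw [← hw1] at this
            exact b.2.1 ((hker _).mp (by omega))
        · -- b = a * w, tprod = w * t₂prod
          rcases b.2.2 _ _ hw1 with hba | hbw
          · have hw : w = 1 := by
              have := hmul (a : M) w
              rw [← hw1, hba] at this
              exact (hker w).mp (by omega)
            rw [hw, one_mul] at hw2
            exact ⟨hba.symm, hw2⟩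
          · exfalso
            rw [← hbw] at hw1
            have := hmul (a : M) (b : M)
            rw [← hw1] at this
            exact a.2.1 ((hker _).mp (by omega))
      obtain ⟨hab, htt⟩ := hab
      have : a = b := Subtype.ext hab
      rw [this, ih t₂ htt]

end Aux

theorem stmt11 {M : Type} [Monoid M] :
    (∃ S : Type, Nonempty (M ≃* FreeMonoid S)) ↔ Equidivisible M ∧ Graded M := by
  constructor
  · rintro ⟨S, ⟨e⟩⟩
    constructor
    · intro u₁ u₂ v₁ v₂ h
      have h' : (e u₁).toList ++ (e u₂).toList = (e v₁).toList ++ (e v₂).toList := by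
        have := congrArg (fun x => (e x).toList) h
        simpa [map_mul] using this
      rcases List.append_eq_append_iff.mp h' with ⟨w, hw1, hw2⟩ | ⟨w, hw1, hw2⟩
      · right
        refine ⟨e.symm (FreeMonoid.ofList w), ?_, ?_⟩
        · apply e.injective
          rw [map_mul, e.apply_symm_apply]
          apply FreeMonoid.toList.injective
          simpa using hw1
        · apply e.injective
          rw [map_mul, e.apply_symm_apply]
          apply FreeMonoid.toList.injective
          simpa using hw2
      · left
        refine ⟨e.symm (FreeMonoid.ofList w), ?_, ?_⟩
        · apply e.injective
          rw [map_mul, e.apply_symm_apply]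
          apply FreeMonoid.toList.injective
          simpa using hw1
        · apply e.injective
          rw [map_mul, e.apply_symm_apply]
          apply FreeMonoid.toList.injective
          simpa using hw2
    · refine ⟨fun x => (e x).toList.length, fun x y => by simp [map_mul], fun x => ?_⟩
      constructor
      · intro h
        have : (e x).toList = [] := List.length_eq_zero_iff.mp h
        have h1 : e x = 1 := FreeMonoid.toList.injective (by simpa using this)
        simpa using e.injective (by simpa using h1)
      · intro h; simp [h]
  · rintro ⟨hE, γ, hmul, hker⟩
    refine ⟨{a : M // IrredElem a}, ⟨?_⟩⟩
    set φ : FreeMonoid {a : M // IrredElem a} →* M := FreeMonoid.lift Subtype.val with hφ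
    have hφ_apply : ∀ l : FreeMonoid {a : M // IrredElem a},
        φ l = (l.toList.map Subtype.val).prod := fun l => FreeMonoid.lift_apply _ _
    have hbij : Function.Bijective φ := by
      constructor
      · intro l₁ l₂ h
        rw [hφ_apply, hφ_apply] at h
        have := fact_unique hE γ hmul hker _ _ h
        exact FreeMonoid.toList.injective this
      · intro x
        obtain ⟨l, hl⟩ := exists_fact γ hmul hker (γ x) x rfl
        exact ⟨FreeMonoid.ofList l, by rw [hφ_apply]; simpa using hl⟩
    exact (MulEquiv.ofBijective φ hbij).symm
end

section
/- Let V be an ordered monoid whose neutral element 1 is the least element, which is equidivisible, and which satisfies: w ≤ u·v implies w = u'·v' for some u' ≤ u and v' ≤ v. Then u·v ≤ u'·v' implies u ≤ u' or v ≤ v'. -/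
theorem stmt14 {M : Type*} [Monoid M] [PartialOrder M]
    [CovariantClass M M (· * ·) (· ≤ ·)]
    [CovariantClass M M (Function.swap (· * ·)) (· ≤ ·)]
    (hone : ∀ x : M, 1 ≤ x)
    (heq : Equidivisible M)
    (hcond : ∀ w u v : M, w ≤ u * v → ∃ u' v' : M, w = u' * v' ∧ u' ≤ u ∧ v' ≤ v)
    (u v u' v' : M) (h : u * v ≤ u' * v') : u ≤ u' ∨ v ≤ v' := by
  obtain ⟨a, b, hab, ha, hb⟩ := hcond _ _ _ h
  rcases heq u v a b hab with ⟨w, hu, hbw⟩ | ⟨w, haw, hv⟩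
  · right
    calc v = 1 * v := (one_mul v).symm
    _ ≤ w * v := mul_le_mul_left (hone w) v
    _ = b := hbw.symm
    _ ≤ v' := hb
  · left
    calc u = u * 1 := (mul_one u).symm
    _ ≤ u * w := mul_le_mul_right (hone w) u
    _ = a := haw.symm
    _ ≤ u' := ha
end

section
/- If a meet-semilattice monoid V satisfies the decomposition property (every pair is summable, i.e., minimal above its product and satisfying the convexity property), then V is cancellative and equidivisible. -/
/-- `(u₁, u₂)` is a minimal pair above `v`: it is above `v` (i.e. `v ≤ u₁·u₂`) and no
pair strictly smaller in the product order is above `v`. -/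
def MinimalAbove {M : Type*} [Monoid M] [PartialOrder M] (u₁ u₂ v : M) : Prop :=
  v ≤ u₁ * u₂ ∧ ∀ w₁ w₂ : M, w₁ ≤ u₁ → w₂ ≤ u₂ → v ≤ w₁ * w₂ → w₁ = u₁ ∧ w₂ = u₂

/-- A pair `(v₁, v₂)` is summable: it is minimal above its product and it satisfies the
convexity property with respect to every minimal pair above its product. -/
def SummablePair {M : Type*} [Monoid M] [PartialOrder M] (v₁ v₂ : M) : Prop :=
  MinimalAbove v₁ v₂ (v₁ * v₂) ∧
    ∀ u₁ u₂ : M, MinimalAbove u₁ u₂ (v₁ * v₂) →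
      (∃ w, v₁ ≤ u₁ * w ∧ u₁ ≤ v₁ ∧ u₂ = w * v₂) ∨
      (∃ w, v₂ ≤ w * u₂ ∧ u₂ ≤ v₂ ∧ u₁ = v₁ * w)

theorem stmt15 {M : Type*} [Monoid M] [SemilatticeInf M]
    [CovariantClass M M (· * ·) (· ≤ ·)]
    [CovariantClass M M (Function.swap (· * ·)) (· ≤ ·)]
    (hdistl : ∀ w u v : M, w * (u ⊓ v) = (w * u) ⊓ (w * v))
    (hdistr : ∀ w u v : M, (u ⊓ v) * w = (u * w) ⊓ (v * w))
    (hdec : ∀ v₁ v₂ : M, SummablePair v₁ v₂) :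
    (∀ w u v : M, w * u = w * v → u = v) ∧
    (∀ u v w : M, u * w = v * w → u = v) ∧
    Equidivisible M := by
  have lcancel : ∀ w u v : M, w * u = w * v → u = v := by
    intro w u v h
    have h1 := (hdec w u).1.2 w (u ⊓ v) le_rfl inf_le_left
      (by rw [hdistl, ← h, inf_idem])
    have h2 := (hdec w v).1.2 w (u ⊓ v) le_rfl inf_le_right
      (by rw [hdistl, h, inf_idem])
    rw [← h1.2, h2.2]
  have rcancel : ∀ u v w : M, u * w = v * w → u = v := by
    intro u v w h
    have h1 := (hdec u w).1.2 (u ⊓ v) w inf_le_left le_rfl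
      (by rw [hdistr, ← h, inf_idem])
    have h2 := (hdec v w).1.2 (u ⊓ v) w inf_le_right le_rfl
      (by rw [hdistr, h, inf_idem])
    rw [← h1.1, h2.1]
  refine ⟨lcancel, rcancel, ?_⟩
  intro u₁ u₂ v₁ v₂ h
  have hmin : MinimalAbove u₁ u₂ (v₁ * v₂) := h ▸ (hdec u₁ u₂).1
  rcases (hdec v₁ v₂).2 u₁ u₂ hmin with ⟨w, _, _, hu2⟩ | ⟨w, _, _, hu1⟩
  · refine Or.inr ⟨w, ?_, hu2⟩
    apply rcancel _ _ v₂
    rw [← h, hu2, ← mul_assoc]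
  · refine Or.inl ⟨w, hu1, ?_⟩
    apply lcancel v₁
    rw [← h, hu1, mul_assoc]
end

section
/- For any subsets X, Y of A*, the lower cones satisfy (XY)^∇ = X^∇ · Y^∇, and if X and Y are non-empty the upper cones satisfy (XY)^Δ = X^Δ · Y^Δ, where X^Δ = ⋂_{x∈X} ↑x and X^∇ = ⋂_{x∈X} ↓x. -/
/-- The upper cone of a set `X`: words above every element of `X`. -/
def upCone {A : Type*} [PartialOrder A] (X : Set (List A)) : Set (List A) :=
  {w | ∀ x ∈ X, Hig x w}

/-- The lower cone of a set `X`: words below every element of `X`. -/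
def downCone {A : Type*} [PartialOrder A] (X : Set (List A)) : Set (List A) :=
  {w | ∀ x ∈ X, Hig w x}

/-! Factor `w` as `w.take k ++ w.drop k`. When `w` lies below (resp. above) every `xy`, the cut
points `k` that compare the prefix correctly with a single `x` form a down-set (resp. up-set) of
`ℕ`, those that compare the suffix with a single `y` an up-set (resp. down-set), and splitting the
single comparison of `w` with `xy` shows that any two of them meet. Pairwise meeting down-sets and
up-sets of `ℕ` have a common point as soon as every down-set contains `0` and the up-sets share a
point; for upper cones these extreme cut points come from the non-emptiness of `X` and `Y`. -/

theorem Nat.exists_forall_mem_of_isLowerSet_of_isUpperSet {ι κ : Type*}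
    {L : ι → Set ℕ} {U : κ → Set ℕ} (hL : ∀ i, IsLowerSet (L i)) (hU : ∀ j, IsUpperSet (U j))
    (hL₀ : ∀ i, 0 ∈ L i) (hU₀ : ∃ n, ∀ j, n ∈ U j) (h : ∀ i j, (L i ∩ U j).Nonempty) :
    ∃ k, (∀ i, k ∈ L i) ∧ ∀ j, k ∈ U j := by
  set k := sInf {n | ∀ j, n ∈ U j}
  have hk : ∀ j, k ∈ U j := Nat.sInf_mem hU₀
  refine ⟨k, fun i => ?_, hk⟩
  rcases Nat.eq_zero_or_eq_succ_pred k with hk₀ | hk₀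
  · exact hk₀ ▸ hL₀ i
  -- `k - 1` lies outside some `U j`; the point of `L i ∩ U j` is then `≥ k`.
  obtain ⟨j, hj⟩ : ∃ j, k - 1 ∉ U j := by
    by_contra! hall
    exact absurd (Nat.sInf_le (show k - 1 ∈ {n | ∀ j, n ∈ U j} from hall)) (by omega)
  obtain ⟨m, hmL, hmU⟩ := h i j
  have hkm : k ≤ m := by
    by_contra! hmk
    exact hj (hU j (by omega) hmU)
  exact hL i hkm hmL

namespace Hig

variable {A : Type*} [PartialOrder A]

theorem trans {u v w : List A} (h₁ : Hig u v) (h₂ : Hig v w) : Hig u w :=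
  IsTrans.trans (r := List.SublistForall₂ (α := A) (· ≤ ·)) _ _ _ h₁ h₂

theorem of_sublist {u v : List A} (h : List.Sublist u v) : Hig u v :=
  h.sublistForall₂

theorem append {u v x y : List A} (h₁ : Hig u x) (h₂ : Hig v y) : Hig (u ++ v) (x ++ y) := by
  obtain ⟨l₁, hf₁, hs₁⟩ := List.sublistForall₂_iff.1 h₁
  obtain ⟨l₂, hf₂, hs₂⟩ := List.sublistForall₂_iff.1 h₂
  exact List.sublistForall₂_iff.2 ⟨l₁ ++ l₂, List.rel_append hf₁ hf₂, hs₁.append hs₂⟩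

theorem exists_take_drop_of_le_append {w x y : List A} (h : Hig w (x ++ y)) :
    ∃ k, Hig (w.take k) x ∧ Hig (w.drop k) y := by
  obtain ⟨l, hf, hs⟩ := List.sublistForall₂_iff.1 h
  obtain ⟨a, b, rfl, ha, hb⟩ := List.sublist_append_iff.1 hs
  exact ⟨a.length, List.sublistForall₂_iff.2 ⟨a, List.forall₂_take_append w a b hf, ha⟩,
    List.sublistForall₂_iff.2 ⟨b, List.forall₂_drop_append w a b hf, hb⟩⟩

theorem exists_take_drop_of_append_le {w x y : List A} (h : Hig (x ++ y) w) :
    ∃ k, Hig x (w.take k) ∧ Hig y (w.drop k) := by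
  obtain ⟨l, hf, hs⟩ := List.sublistForall₂_iff.1 h
  have hx : List.Forall₂ (· ≤ ·) x (l.take x.length) := by
    simpa only [List.take_left] using List.forall₂_take x.length hf
  have hy : List.Forall₂ (· ≤ ·) y (l.drop x.length) := by
    simpa only [List.drop_left] using List.forall₂_drop x.length hf
  rw [← List.take_append_drop x.length l] at hs
  obtain ⟨a, b, rfl, ha, hb⟩ := List.append_sublist_iff.1 hs
  refine ⟨a.length, ?_, ?_⟩
  · rw [List.take_left]; exact List.sublistForall₂_iff.2 ⟨_, hx, ha⟩
  · rw [List.drop_left]; exact List.sublistForall₂_iff.2 ⟨_, hy, hb⟩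

end Hig

section Cones

variable {A : Type*} [PartialOrder A] {X Y : Set (List A)}

theorem mem_downCone_conc {w : List A} :
    w ∈ downCone (conc X Y) ↔ ∀ x ∈ X, ∀ y ∈ Y, Hig w (x ++ y) :=
  Set.forall_mem_image2

theorem mem_upCone_conc {w : List A} :
    w ∈ upCone (conc X Y) ↔ ∀ x ∈ X, ∀ y ∈ Y, Hig (x ++ y) w :=
  Set.forall_mem_image2

theorem conc_downCone_subset : conc (downCone X) (downCone Y) ⊆ downCone (conc X Y) := by
  rintro _ ⟨u, hu, v, hv, rfl⟩
  exact mem_downCone_conc.2 fun x hx y hy => (hu x hx).append (hv y hy)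

theorem conc_upCone_subset : conc (upCone X) (upCone Y) ⊆ upCone (conc X Y) := by
  rintro _ ⟨u, hu, v, hv, rfl⟩
  exact mem_upCone_conc.2 fun x hx y hy => (hu x hx).append (hv y hy)

theorem downCone_conc_subset : downCone (conc X Y) ⊆ conc (downCone X) (downCone Y) := by
  intro w hw
  obtain ⟨k, hkX, hkY⟩ := Nat.exists_forall_mem_of_isLowerSet_of_isUpperSet
    (L := fun x : X => {k | Hig (w.take k) x}) (U := fun y : Y => {k | Hig (w.drop k) y})
    (fun _ _ _ hkl hl => (Hig.of_sublist (List.take_sublist_take_left hkl)).trans hl)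
    (fun _ _ _ hkl hk => (Hig.of_sublist (List.drop_sublist_drop_left w hkl)).trans hk)
    (fun _ => .nil) ⟨w.length, fun _ => by simpa using .nil⟩
    (fun x y => Hig.exists_take_drop_of_le_append (mem_downCone_conc.1 hw x x.2 y y.2))
  exact ⟨_, fun x hx => hkX ⟨x, hx⟩, _, fun y hy => hkY ⟨y, hy⟩, List.take_append_drop k w⟩

theorem upCone_conc_subset (hX : X.Nonempty) (hY : Y.Nonempty) :
    upCone (conc X Y) ⊆ conc (upCone X) (upCone Y) := by
  intro w hw
  have hXY := mem_upCone_conc.1 hw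
  obtain ⟨x₀, hx₀⟩ := hX
  obtain ⟨y₀, hy₀⟩ := hY
  have hYw : ∀ y ∈ Y, Hig y w := fun y hy =>
    (Hig.of_sublist (List.sublist_append_right x₀ y)).trans (hXY x₀ hx₀ y hy)
  have hXw : ∀ x ∈ X, Hig x w := fun x hx =>
    (Hig.of_sublist (List.sublist_append_left x y₀)).trans (hXY x hx y₀ hy₀)
  obtain ⟨k, hkY, hkX⟩ := Nat.exists_forall_mem_of_isLowerSet_of_isUpperSet
    (L := fun y : Y => {k | Hig (y : List A) (w.drop k)})
    (U := fun x : X => {k | Hig (x : List A) (w.take k)})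
    (fun _ _ _ hkl hl => hl.trans (.of_sublist (List.drop_sublist_drop_left w hkl)))
    (fun _ _ _ hkl hk => hk.trans (.of_sublist (List.take_sublist_take_left hkl)))
    (fun y => by simpa using hYw y y.2) ⟨w.length, fun x => by simpa using hXw x x.2⟩
    (fun y x => (Hig.exists_take_drop_of_append_le (hXY x x.2 y y.2)).imp fun _ h => h.symm)
  exact ⟨_, fun x hx => hkX ⟨x, hx⟩, _, fun y hy => hkY ⟨y, hy⟩, List.take_append_drop k w⟩

end Cones

theorem stmt16 {A : Type*} [PartialOrder A] (X Y : Set (List A)) :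
    downCone (conc X Y) = conc (downCone X) (downCone Y) ∧
    (X.Nonempty → Y.Nonempty → upCone (conc X Y) = conc (upCone X) (upCone Y)) :=
  ⟨downCone_conc_subset.antisymm conc_downCone_subset,
    fun hX hY => (upCone_conc_subset hX hY).antisymm conc_upCone_subset⟩
end
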